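/- arXiv:2510.00404 — 2 statements merged into one kernel-verified Lean document; each statement's English description precedes it below -/
import Mathlib

section
/- Let n be a positive integer, λ > 0, and u ∈ ℝⁿ. Define v ∈ ℝⁿ by vᵢ = uᵢ if uᵢ ≥ √(2λ) and vᵢ = 0 otherwise. Then v minimizes z ↦ (1/2)‖z − u‖₂² + λ·‖z‖₀ over the set {z ∈ ℝⁿ : zᵢ ≥ 0 for all i}, where ‖z‖₀ denotes the number of nonzero entries of z. -/
/-!
The objective is separable: `½‖z - u‖² + λ‖z‖₀ = ∑ᵢ (½(zᵢ - uᵢ)² + λ·[zᵢ ≠ 0])`, so it suffices to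
minimize each scalar term over `zᵢ ≥ 0`. There the only candidates are `zᵢ = 0`, with cost `½uᵢ²`,
and `zᵢ = uᵢ` (when `uᵢ > 0`), with cost `λ`; the first is better exactly when `uᵢ² < 2λ`.
-/

open Classical in
/-- The ℓ₀ "norm": the number of nonzero entries of a vector. -/
noncomputable def l0 {n : ℕ} (z : Fin n → ℝ) : ℕ :=
  (Finset.univ.filter (fun i => z i ≠ 0)).card

noncomputable def jumpReLU (θ u : ℝ) : ℝ := if θ ≤ u then u else 0

open Classical in
noncomputable def proxObjective (lam u z : ℝ) : ℝ :=
  (1/2) * (z - u)^2 + lam * if z ≠ 0 then 1 else 0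

section proxObjective

variable {lam : ℝ}

theorem proxObjective_zero (u : ℝ) : proxObjective lam u 0 = u ^ 2 / 2 := by
  simp only [proxObjective, ne_eq, not_true_eq_false, if_false]
  ring

theorem le_proxObjective_of_ne_zero (u : ℝ) {z : ℝ} (hz : z ≠ 0) : lam ≤ proxObjective lam u z := by
  simp only [proxObjective, hz, ne_eq, not_false_eq_true, if_true]
  nlinarith [sq_nonneg (z - u)]

theorem half_sq_le_proxObjective (hlam : 0 ≤ lam) (u z : ℝ) :
    (z - u) ^ 2 / 2 ≤ proxObjective lam u z := by
  unfold proxObjective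
  split_ifs <;> nlinarith

theorem proxObjective_self_le (hlam : 0 ≤ lam) (u : ℝ) : proxObjective lam u u ≤ lam := by
  unfold proxObjective
  split_ifs <;> simp [hlam]

theorem proxObjective_jumpReLU_le (hlam : 0 ≤ lam) (u : ℝ) {z : ℝ} (hz : 0 ≤ z) :
    proxObjective lam u (jumpReLU (√(2 * lam)) u) ≤ proxObjective lam u z := by
  have hθ : √(2 * lam) ^ 2 = 2 * lam := Real.sq_sqrt (by linarith)
  have hθ_nonneg : 0 ≤ √(2 * lam) := Real.sqrt_nonneg _
  unfold jumpReLU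
  split_ifs with hu
  · rcases eq_or_ne z 0 with rfl | hz0
    · calc proxObjective lam u u ≤ lam := proxObjective_self_le hlam u
        _ ≤ proxObjective lam u 0 := by rw [proxObjective_zero]; nlinarith
    · exact (proxObjective_self_le hlam u).trans (le_proxObjective_of_ne_zero u hz0)
  · rcases eq_or_ne z 0 with rfl | hz0
    · exact le_rfl
    rw [proxObjective_zero]
    rcases le_or_gt u 0 with hu0 | hu0
    · exact le_trans (by nlinarith) (half_sq_le_proxObjective hlam u z)
    · exact le_trans (by nlinarith) (le_proxObjective_of_ne_zero u hz0)

end proxObjective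

open Classical in
theorem half_sum_sq_add_l0_eq_sum_proxObjective {n : ℕ} (lam : ℝ) (u z : Fin n → ℝ) :
    (1/2) * ∑ i, (z i - u i)^2 + lam * (l0 z : ℝ) = ∑ i, proxObjective lam (u i) (z i) := by
  simp only [l0, Finset.natCast_card_filter, proxObjective, Finset.sum_add_distrib,
    Finset.mul_sum]

theorem stmt_4_general (n : ℕ) (lam : ℝ) (hlam : 0 < lam) (u : Fin n → ℝ) :
    ∀ z : Fin n → ℝ, (∀ i, 0 ≤ z i) →
      (1/2) * ∑ i, ((if Real.sqrt (2 * lam) ≤ u i then u i else 0) - u i)^2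
          + lam * (l0 (fun i => if Real.sqrt (2 * lam) ≤ u i then u i else 0) : ℝ)
        ≤ (1/2) * ∑ i, (z i - u i)^2 + lam * (l0 z : ℝ) := by
  intro z hz
  rw [half_sum_sq_add_l0_eq_sum_proxObjective, half_sum_sq_add_l0_eq_sum_proxObjective]
  exact Finset.sum_le_sum fun i _ => proxObjective_jumpReLU_le hlam.le (u i) (hz i)

/-- Case II of Lemma 1 (vector form): the componentwise JumpReLU with threshold
`√(2λ)`, i.e. `vᵢ = uᵢ` if `uᵢ ≥ √(2λ)` and `vᵢ = 0` otherwise, minimizes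
`z ↦ (1/2)‖z-u‖₂² + λ‖z‖₀` over the nonnegative orthant. -/
theorem stmt_4 (n : ℕ) (hn : 0 < n) (lam : ℝ) (hlam : 0 < lam) (u : Fin n → ℝ) :
    ∀ z : Fin n → ℝ, (∀ i, 0 ≤ z i) →
      (1/2) * ∑ i, ((if Real.sqrt (2 * lam) ≤ u i then u i else 0) - u i)^2
          + lam * (l0 (fun i => if Real.sqrt (2 * lam) ≤ u i then u i else 0) : ℝ)
        ≤ (1/2) * ∑ i, (z i - u i)^2 + lam * (l0 z : ℝ) :=
  stmt_4_general n lam hlam u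
end

section
/- Let n ≥ k ≥ 1 be integers and u ∈ ℝⁿ. Among all index sets S ⊆ {1,…,n} with |S| ≤ k, the quantity Σ_{i∉S} uᵢ² + Σ_{i∈S} min(uᵢ, 0)² is minimized by any set T of exactly k indices satisfying uᵢ ≥ uⱼ for every i ∈ T and j ∉ T (i.e., T consists of k largest entries of u). -/
/-!
Splitting `uᵢ² = min(uᵢ,0)² + max(uᵢ,0)²` turns the objective into the constant
`∑ᵢ min(uᵢ,0)²` plus `∑_{i∉S} max(uᵢ,0)²`, so minimizing it means maximizing
`∑_{i∈S} max(uᵢ,0)²` over `|S| ≤ k`. The weights `max(uᵢ,0)²` are nonnegative and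
monotone in `uᵢ`, so a set of `k` largest entries is optimal: on `S \ T` every weight is
at most the smallest weight on `T \ S`, and `|S \ T| ≤ |T \ S|`.
-/

open Finset

theorem sq_eq_min_sq_add_max_sq {R : Type*} [CommRing R] [LinearOrder R] [IsStrictOrderedRing R]
    (x : R) : x ^ 2 = min x 0 ^ 2 + max x 0 ^ 2 := by
  rcases le_total x 0 with h | h
  · rw [min_eq_left h, max_eq_right h]; ring
  · rw [min_eq_right h, max_eq_left h]; ring

theorem Finset.sum_le_sum_of_forall_le_of_card_le {ι M : Type*} [DecidableEq ι]
    [AddCommMonoid M] [LinearOrder M] [IsOrderedAddMonoid M] {f : ι → M} {S T : Finset ι}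
    (hf : ∀ i ∈ T, 0 ≤ f i) (hTop : ∀ i ∈ T, ∀ j ∉ T, f j ≤ f i) (hcard : #S ≤ #T) :
    ∑ i ∈ S, f i ≤ ∑ i ∈ T, f i := by
  rw [← sum_inter_add_sum_sdiff S T, ← sum_inter_add_sum_sdiff T S, inter_comm S T]
  refine add_le_add_right ?_ _
  have hcard' : #(S \ T) ≤ #(T \ S) := card_sdiff_le_card_sdiff_iff.mpr hcard
  rcases (T \ S).eq_empty_or_nonempty with hTS | hTS
  · have hST : S \ T = ∅ := by simpa [hTS] using hcard'
    rw [hST, hTS]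
  obtain ⟨i₀, hi₀, hi₀_min⟩ := exists_min_image (T \ S) f hTS
  have hi₀T : i₀ ∈ T := (mem_sdiff.mp hi₀).1
  calc ∑ j ∈ S \ T, f j
      ≤ #(S \ T) • f i₀ :=
        sum_le_card_nsmul _ _ _ fun j hj => hTop i₀ hi₀T j (mem_sdiff.mp hj).2
    _ ≤ #(T \ S) • f i₀ := nsmul_le_nsmul_left (hf i₀ hi₀T) hcard'
    _ ≤ ∑ i ∈ T \ S, f i := card_nsmul_le_sum _ _ _ hi₀_min

theorem sum_compl_sq_add_sum_min_sq {ι : Type*} [Fintype ι] [DecidableEq ι] (u : ι → ℝ)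
    (S : Finset ι) :
    ∑ i ∈ Sᶜ, u i ^ 2 + ∑ i ∈ S, min (u i) 0 ^ 2
      = ∑ i, min (u i) 0 ^ 2 + ∑ i ∈ Sᶜ, max (u i) 0 ^ 2 := by
  simp_rw [sq_eq_min_sq_add_max_sq (u _), sum_add_distrib, ← sum_compl_add_sum S]
  ring

theorem stmt_13_general (n k : ℕ) (u : Fin n → ℝ)
    (T : Finset (Fin n)) (hT : T.card = k)
    (hTop : ∀ i ∈ T, ∀ j ∉ T, u j ≤ u i) :
    ∀ S : Finset (Fin n), S.card ≤ k →
      ∑ i ∈ Tᶜ, (u i)^2 + ∑ i ∈ T, (min (u i) 0)^2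
        ≤ ∑ i ∈ Sᶜ, (u i)^2 + ∑ i ∈ S, (min (u i) 0)^2 := by
  intro S hS
  rw [sum_compl_sq_add_sum_min_sq, sum_compl_sq_add_sum_min_sq]
  have hpos_part : ∑ i ∈ S, max (u i) 0 ^ 2 ≤ ∑ i ∈ T, max (u i) 0 ^ 2 :=
    sum_le_sum_of_forall_le_of_card_le (fun _ _ => sq_nonneg _)
      (fun i hi j hj => pow_le_pow_left₀ (le_max_right _ _)
        (max_le_max_right 0 (hTop i hi j hj)) 2)
      (hS.trans hT.ge)
  have hS_split := sum_compl_add_sum S fun i => max (u i) 0 ^ 2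
  have hT_split := sum_compl_add_sum T fun i => max (u i) 0 ^ 2
  linarith

/-- Support-selection step for Case III of Lemma 1 (TopK): among all index sets
`S` with `|S| ≤ k`, the residual objective `∑_{i∉S} uᵢ² + ∑_{i∈S} min(uᵢ,0)²` is
minimized by any set `T` of exactly `k` largest entries of `u`. -/
theorem stmt_13 (n k : ℕ) (hk : 1 ≤ k) (hkn : k ≤ n) (u : Fin n → ℝ)
    (T : Finset (Fin n)) (hT : T.card = k)
    (hTop : ∀ i ∈ T, ∀ j ∉ T, u j ≤ u i) :
    ∀ S : Finset (Fin n), S.card ≤ k →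
      ∑ i ∈ Tᶜ, (u i)^2 + ∑ i ∈ T, (min (u i) 0)^2
        ≤ ∑ i ∈ Sᶜ, (u i)^2 + ∑ i ∈ S, (min (u i) 0)^2 :=
  stmt_13_general n k u T hT hTop
end
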